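/- arXiv:2604.23756 — 2 statements merged into one kernel-verified Lean document; each statement's English description precedes it below -/
import Mathlib

section
/- For subdistributions Δ, Θ over S and a relation R ⊆ S × D(S), Δ lift(R) Θ holds if and only if there exists a finite index set I, elements s_i ∈ S, probabilities p_i, and subdistributions Θ_i such that Δ = ⊕_{i∈I} p_i·δ¹_{s_i}, Θ = ⊕_{i∈I} p_i·Θ_i, and s_i R Θ_i for all i. -/
open scoped BigOperators

/-- The mass of a subdistribution. -/
noncomputable def mass {S : Type*} (Δ : S → ℝ) : ℝ := ∑ᶠ s, Δ s

/-- A subdistribution over `S`. -/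
def IsSubdist {S : Type*} (Δ : S → ℝ) : Prop :=
  (Function.support Δ).Finite ∧ (∀ s, 0 ≤ Δ s ∧ Δ s ≤ 1) ∧ mass Δ ≤ 1

/-- The point distribution `δ¹_s`. -/
def point {S : Type*} [DecidableEq S] (s : S) : S → ℝ := fun t => if t = s then 1 else 0

/-- The left-linear lifting of a relation `R ⊆ S × D(S)`. -/
inductive Lift {S : Type*} [DecidableEq S] (R : S → (S → ℝ) → Prop) :
    (S → ℝ) → (S → ℝ) → Prop where
  | point (s : S) (Θ : S → ℝ) : R s Θ → Lift R (point s) Θ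
  | comb (n : ℕ) (p : Fin n → ℝ) (Δi Θi : Fin n → S → ℝ) :
      (∀ i, 0 ≤ p i) → (∀ i, Lift R (Δi i) (Θi i)) →
      mass (fun s => ∑ i, p i * Δi i s) ≤ 1 →
      Lift R (fun s => ∑ i, p i * Δi i s) (fun s => ∑ i, p i * Θi i s)

private theorem lift_nf_forward {S : Type*} [DecidableEq S] (R : S → (S → ℝ) → Prop)
    {Δ Θ : S → ℝ} (h : Lift R Δ Θ) :
      ∃ (n : ℕ) (s : Fin n → S) (p : Fin n → ℝ) (Θi : Fin n → S → ℝ),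
        (∀ i, 0 ≤ p i) ∧
        Δ = (fun t => ∑ i, p i * point (s i) t) ∧
        Θ = (fun t => ∑ i, p i * Θi i t) ∧
        (∀ i, R (s i) (Θi i)) := by
  induction h with
  | point s Θ h =>
    refine ⟨1, fun _ => s, fun _ => 1, fun _ => Θ, fun _ => zero_le_one, ?_, ?_, fun _ => h⟩ <;>
      funext t <;> simp
  | comb n p Δi Θi hp hlift hmass ih =>
    choose m sF pF ΘF hpF hΔF hΘF hRF using ih
    set σ := (i : Fin n) × Fin (m i) with hσ
    let e : Fin (Fintype.card σ) ≃ σ := (Fintype.equivFin σ).symm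
    refine ⟨Fintype.card σ, fun j => sF (e j).1 (e j).2,
      fun j => p (e j).1 * pF (e j).1 (e j).2, fun j => ΘF (e j).1 (e j).2,
      fun j => mul_nonneg (hp _) (hpF _ _), ?_, ?_, fun j => hRF _ _⟩
    · funext t
      have := Equiv.sum_comp e
        (fun x : σ => p x.1 * pF x.1 x.2 * point (sF x.1 x.2) t)
      rw [show (fun j => (fun j' => p (e j').1 * pF (e j').1 (e j').2) j *
          point (sF (e j).1 (e j).2) t) = fun j =>
          (fun x : σ => p x.1 * pF x.1 x.2 * point (sF x.1 x.2) t) (e j) from rfl, this,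
        ← Finset.univ_sigma_univ, Finset.sum_sigma]
      simp only [mul_assoc, ← Finset.mul_sum]
      exact Finset.sum_congr rfl fun i _ => by rw [hΔF i]
    · funext t
      have := Equiv.sum_comp e
        (fun x : σ => p x.1 * pF x.1 x.2 * ΘF x.1 x.2 t)
      rw [show (fun j => (fun j' => p (e j').1 * pF (e j').1 (e j').2) j *
          ΘF (e j).1 (e j).2 t) = fun j =>
          (fun x : σ => p x.1 * pF x.1 x.2 * ΘF x.1 x.2 t) (e j) from rfl, this,
        ← Finset.univ_sigma_univ, Finset.sum_sigma]
      simp only [mul_assoc, ← Finset.mul_sum]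
      exact Finset.sum_congr rfl fun i _ => by rw [hΘF i]

/-- normal form of the left-linear lifting:
`Δ lift(R) Θ` iff `Δ = ⊕_i p_i·δ¹_{s_i}`, `Θ = ⊕_i p_i·Θ_i` with `s_i R Θ_i`. -/
theorem lift_normal_form {S : Type*} [DecidableEq S] (R : S → (S → ℝ) → Prop)
    (hR : ∀ s Θ, R s Θ → IsSubdist Θ)
    (Δ Θ : S → ℝ) (hΔ : IsSubdist Δ) (hΘ : IsSubdist Θ) :
    Lift R Δ Θ ↔
      ∃ (n : ℕ) (s : Fin n → S) (p : Fin n → ℝ) (Θi : Fin n → S → ℝ),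
        (∀ i, 0 ≤ p i) ∧
        Δ = (fun t => ∑ i, p i * point (s i) t) ∧
        Θ = (fun t => ∑ i, p i * Θi i t) ∧
        (∀ i, R (s i) (Θi i)) := by
  constructor
  · exact lift_nf_forward R
  · rintro ⟨n, s, p, Θi, hp, hΔeq, hΘeq, hRi⟩
    rw [hΔeq, hΘeq]
    exact Lift.comb n p (fun i => point (s i)) Θi hp
      (fun i => Lift.point _ _ (hRi i)) (by rw [← hΔeq]; exact hΔ.2.2)
end

section
/- Let R be a relation on subdistributions such that Δ R Θ implies |Δ| ≥ |Θ|. Then the weak linear closure lc(R) of R is left-linear: for any finite families Δ_i lc(R) Θ_i and probabilities p_i, if ⊕_i p_i·Δ_i is a well-defined subdistribution (mass ≤ 1), then ⊕_i p_i·Θ_i is also well-defined and (⊕_i p_i·Δ_i) lc(R) (⊕_i p_i·Θ_i). -/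
open scoped BigOperators

/-- The weak linear closure `lc(R)` of a relation on subdistributions: it relates
`⊕_i p_i·Δ_i` to `⊕_i p_i·Θ_i` whenever each `Δ_i R Θ_i` and both composite
subdistributions are defined (mass ≤ 1). -/
inductive LC {S : Type*} (R : (S → ℝ) → (S → ℝ) → Prop) :
    (S → ℝ) → (S → ℝ) → Prop where
  | comb (n : ℕ) (p : Fin n → ℝ) (Δi Θi : Fin n → S → ℝ) :
      (∀ i, 0 ≤ p i) → (∀ i, R (Δi i) (Θi i)) →
      mass (fun s => ∑ i, p i * Δi i s) ≤ 1 →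
      mass (fun s => ∑ i, p i * Θi i s) ≤ 1 →
      LC R (fun s => ∑ i, p i * Δi i s) (fun s => ∑ i, p i * Θi i s)


/-!
Each `Δᵢ lc(R) Θᵢ` unfolds to `Δᵢ = ⊕ⱼ qᵢⱼ·Aᵢⱼ` and `Θᵢ = ⊕ⱼ qᵢⱼ·Bᵢⱼ` with `Aᵢⱼ R Bᵢⱼ`, so
`⊕ᵢ pᵢ·Δᵢ` and `⊕ᵢ pᵢ·Θᵢ` are the single combinations `⊕ᵢⱼ pᵢqᵢⱼ·Aᵢⱼ` and `⊕ᵢⱼ pᵢqᵢⱼ·Bᵢⱼ`.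
Mass is linear on finitely supported functions and `R` does not increase it, hence neither
does `lc(R)`; so `|⊕ᵢ pᵢ·Θᵢ| ≤ |⊕ᵢ pᵢ·Δᵢ| ≤ 1`, and the flattened combination is one
instance of the generating rule of `lc(R)`.
-/

open Function

theorem Finset.sum_mul_sum_eq_sum_sigma {ι : Type*} {κ : ι → Type*} {M : Type*}
    [Fintype ι] [∀ i, Fintype (κ i)] [CommSemiring M] (p : ι → M) (q : ∀ i, κ i → M)
    (f : ∀ i, κ i → M) :
    ∑ i, p i * ∑ j, q i j * f i j = ∑ x : Σ i, κ i, p x.1 * q x.1 x.2 * f x.1 x.2 := by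
  simp_rw [Finset.mul_sum, mul_assoc]
  rw [Fintype.sum_sigma]

section Mass

variable {S ι : Type*} [Fintype ι]

theorem hasFiniteSupport_sum_mul (c : ι → ℝ) {g : ι → S → ℝ}
    (hg : ∀ i, (g i).HasFiniteSupport) :
    HasFiniteSupport fun s => ∑ i, c i * g i s :=
  HasFiniteSupport.sum (fun i => (hg i).mul_right (fun _ => c i)) _

theorem mass_sum_mul (c : ι → ℝ) {g : ι → S → ℝ} (hg : ∀ i, (g i).HasFiniteSupport) :
    mass (fun s => ∑ i, c i * g i s) = ∑ i, c i * mass (g i) := by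
  unfold mass
  rw [finsum_sum_comm _ (fun s i => c i * g i s) fun i _ => (hg i).mul_right (fun _ => c i)]
  exact Finset.sum_congr rfl fun i _ => (mul_finsum (g i) (c i)).symm

theorem mass_sum_mul_le_of_le {c : ι → ℝ} (hc : ∀ i, 0 ≤ c i) {f g : ι → S → ℝ}
    (hf : ∀ i, (f i).HasFiniteSupport) (hg : ∀ i, (g i).HasFiniteSupport)
    (hfg : ∀ i, mass (g i) ≤ mass (f i)) :
    mass (fun s => ∑ i, c i * g i s) ≤ mass (fun s => ∑ i, c i * f i s) := by
  rw [mass_sum_mul c hg, mass_sum_mul c hf]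
  exact Finset.sum_le_sum fun i _ => mul_le_mul_of_nonneg_left (hfg i) (hc i)

end Mass

namespace LC

variable {S : Type*} {R : (S → ℝ) → (S → ℝ) → Prop}

theorem exists_eq_sum_mul {Δ Θ : S → ℝ} (h : LC R Δ Θ) :
    ∃ (m : ℕ) (q : Fin m → ℝ) (A B : Fin m → S → ℝ),
      (∀ j, 0 ≤ q j) ∧ (∀ j, R (A j) (B j)) ∧
      Δ = (fun s => ∑ j, q j * A j s) ∧ Θ = (fun s => ∑ j, q j * B j s) := by
  cases h with
  | comb m q A B hq hR _ _ => exact ⟨m, q, A, B, hq, hR, rfl, rfl⟩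

theorem comb_of_fintype {ι : Type*} [Fintype ι] (p : ι → ℝ) (Δi Θi : ι → S → ℝ)
    (hp : ∀ i, 0 ≤ p i) (hR : ∀ i, R (Δi i) (Θi i))
    (hΔ : mass (fun s => ∑ i, p i * Δi i s) ≤ 1) (hΘ : mass (fun s => ∑ i, p i * Θi i s) ≤ 1) :
    LC R (fun s => ∑ i, p i * Δi i s) (fun s => ∑ i, p i * Θi i s) := by
  let e := (Fintype.equivFin ι).symm
  have reindex : ∀ f : ι → S → ℝ,
      (fun s => ∑ k, p (e k) * f (e k) s) = fun s => ∑ i, p i * f i s :=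
    fun f => funext fun s => e.sum_comp fun i => p i * f i s
  have h := LC.comb (R := R) _ (p ∘ e) (Δi ∘ e) (Θi ∘ e) (fun k => hp _) (fun k => hR _)
    ((reindex Δi).symm ▸ hΔ) ((reindex Θi).symm ▸ hΘ)
  simpa only [Function.comp_apply, reindex] using h

variable (hsub : ∀ Δ Θ, R Δ Θ → IsSubdist Δ ∧ IsSubdist Θ)
include hsub

theorem hasFiniteSupport_left {Δ Θ : S → ℝ} (h : LC R Δ Θ) : Δ.HasFiniteSupport := by
  obtain ⟨m, q, A, B, -, hR, rfl, -⟩ := h.exists_eq_sum_mul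
  exact hasFiniteSupport_sum_mul q fun j => (hsub _ _ (hR j)).1.1

theorem hasFiniteSupport_right {Δ Θ : S → ℝ} (h : LC R Δ Θ) : Θ.HasFiniteSupport := by
  obtain ⟨m, q, A, B, -, hR, -, rfl⟩ := h.exists_eq_sum_mul
  exact hasFiniteSupport_sum_mul q fun j => (hsub _ _ (hR j)).2.1

theorem mass_le (hmass : ∀ Δ Θ, R Δ Θ → mass Θ ≤ mass Δ) {Δ Θ : S → ℝ} (h : LC R Δ Θ) :
    mass Θ ≤ mass Δ := by
  obtain ⟨m, q, A, B, hq, hR, rfl, rfl⟩ := h.exists_eq_sum_mul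
  exact mass_sum_mul_le_of_le hq (fun j => (hsub _ _ (hR j)).1.1)
    (fun j => (hsub _ _ (hR j)).2.1) fun j => hmass _ _ (hR j)

end LC

/-- if `R` relates subdistributions and is mass non-increasing,
then the weak linear closure `lc(R)` is left-linear. -/
theorem lc_left_linear {S : Type*} (R : (S → ℝ) → (S → ℝ) → Prop)
    (hsub : ∀ Δ Θ, R Δ Θ → IsSubdist Δ ∧ IsSubdist Θ)
    (hmass : ∀ Δ Θ, R Δ Θ → mass Θ ≤ mass Δ)
    (n : ℕ) (p : Fin n → ℝ) (Δi Θi : Fin n → S → ℝ)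
    (hp : ∀ i, 0 ≤ p i) (hlc : ∀ i, LC R (Δi i) (Θi i))
    (hdef : mass (fun s => ∑ i, p i * Δi i s) ≤ 1) :
    mass (fun s => ∑ i, p i * Θi i s) ≤ 1 ∧
      LC R (fun s => ∑ i, p i * Δi i s) (fun s => ∑ i, p i * Θi i s) := by
  have hΘdef : mass (fun s => ∑ i, p i * Θi i s) ≤ 1 :=
    (mass_sum_mul_le_of_le hp (fun i => (hlc i).hasFiniteSupport_left hsub)
      (fun i => (hlc i).hasFiniteSupport_right hsub)
      fun i => (hlc i).mass_le hsub hmass).trans hdef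
  refine ⟨hΘdef, ?_⟩
  choose m q A B hq hR hΔ hΘ using fun i => (hlc i).exists_eq_sum_mul
  have flatten : ∀ (f : Fin n → S → ℝ) (C : ∀ i, Fin (m i) → S → ℝ),
      (∀ i, f i = fun s => ∑ j, q i j * C i j s) →
      (fun s => ∑ i, p i * f i s) =
        fun s => ∑ x : Σ i, Fin (m i), p x.1 * q x.1 x.2 * C x.1 x.2 s := by
    intro f C hf
    funext s
    simp only [hf]
    exact Finset.sum_mul_sum_eq_sum_sigma p q fun i j => C i j s
  rw [flatten Δi A hΔ] at hdef ⊢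
  rw [flatten Θi B hΘ] at hΘdef ⊢
  exact LC.comb_of_fintype _ _ _ (fun x => mul_nonneg (hp _) (hq _ _)) (fun x => hR _ _)
    hdef hΘdef
end
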